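/- arXiv:2002.12463 — 2 statements merged into one kernel-verified Lean document; each statement's English description precedes it below -/
import Mathlib

section
/- Let Σ ∈ ℝ^{d×d} be a symmetric positive-definite matrix, γ ∈ ℝ^d with γ ≠ 0, q ∈ (0,1), and B := { z ∈ ℝ^d : γᵀ Σ⁻¹ z ≥ √(γᵀ Σ⁻¹ γ) · Φ⁻¹(1 − q) }. Then for every measurable set S ⊆ ℝ^d with N(0,Σ)(S) ≤ N(0,Σ)(B), it holds that N(γ,Σ)(S) ≤ N(γ,Σ)(B); equivalently, for β ~ N(0,Σ), if P(β ∈ S) ≤ P(β ∈ B) then P(β + γ ∈ S) ≤ P(β + γ ∈ B). -/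
open MeasureTheory ProbabilityTheory Matrix Set

noncomputable def Phi (x : ℝ) : ℝ := ((gaussianReal 0 1) (Set.Iic x)).toReal

noncomputable def PhiInv : ℝ → ℝ := Function.invFun Phi

noncomputable def gaussianPDF {d : ℕ} (μ : EuclideanSpace ℝ (Fin d))
    (S : Matrix (Fin d) (Fin d) ℝ) (z : EuclideanSpace ℝ (Fin d)) : ℝ :=
  (2 * Real.pi) ^ (-(d : ℝ) / 2) * S.det ^ (-(1 : ℝ) / 2) *
    Real.exp (-(1 / 2) * ((fun i => z i - μ i) ⬝ᵥ (S⁻¹ *ᵥ fun i => z i - μ i)))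

noncomputable def gaussianMeasure {d : ℕ} (μ : EuclideanSpace ℝ (Fin d))
    (S : Matrix (Fin d) (Fin d) ℝ) : Measure (EuclideanSpace ℝ (Fin d)) :=
  volume.withDensity fun z => ENNReal.ofReal (gaussianPDF μ S z)

/-!
The likelihood ratio of `N(γ, Σ)` to `N(0, Σ)` is `z ↦ exp (γᵀ Σ⁻¹ z - γᵀ Σ⁻¹ γ / 2)`, an
increasing function of `γᵀ Σ⁻¹ z`, so `B` is a superlevel set `{ratio ≥ k}`. This is the
Neyman–Pearson argument: `T \ B` has `N(γ, Σ)`-mass at most `k` times its `N(0, Σ)`-mass,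
`B \ T` has `N(γ, Σ)`-mass at least `k` times its `N(0, Σ)`-mass, and the hypothesis says that
`T \ B` is `N(0, Σ)`-lighter than `B \ T`.
-/

open scoped ENNReal

section NeymanPearson

variable {α : Type*} [MeasurableSpace α]

theorem le_of_neymanPearson (μ ν : Measure α) {B T : Set α} (hB : MeasurableSet B)
    (hT : MeasurableSet T) (k : ℝ≥0∞)
    (h_on : ∀ U ⊆ B, MeasurableSet U → k * μ U ≤ ν U)
    (h_off : ∀ U ⊆ Bᶜ, MeasurableSet U → ν U ≤ k * μ U)
    (hTB : μ T ≤ μ B) : ν T ≤ ν B := by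
  by_cases hνB : ν B = ∞
  · exact hνB ▸ le_top
  suffices h_out_in : k * μ (T \ B) ≤ ν (B \ T) by
    calc ν T = ν (T ∩ B) + ν (T \ B) := (measure_inter_add_sdiff T hB).symm
      _ ≤ ν (T ∩ B) + k * μ (T \ B) := by
        gcongr
        exact h_off _ (fun _ hx => hx.2) (hT.diff hB)
      _ ≤ ν (T ∩ B) + ν (B \ T) := by gcongr
      _ = ν B := by rw [inter_comm, measure_inter_add_sdiff B hT]
  rcases eq_or_ne k 0 with rfl | hk
  · simp
  have hμTB : μ (T ∩ B) ≠ ∞ := by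
    intro h
    have : k * μ (T ∩ B) ≤ ν B :=
      (h_on _ inter_subset_right (hT.inter hB)).trans (measure_mono inter_subset_right)
    simp [h, hk, hνB] at this
  have h_cancel : μ (T \ B) ≤ μ (B \ T) := by
    rw [← ENNReal.add_le_add_iff_left hμTB, measure_inter_add_sdiff T hB, inter_comm,
      measure_inter_add_sdiff B hT]
    exact hTB
  calc k * μ (T \ B) ≤ k * μ (B \ T) := by gcongr
    _ ≤ ν (B \ T) := h_on _ (fun _ hx => hx.1) (hB.diff hT)

variable (m : Measure α) {f g : α → ℝ≥0∞} {k : ℝ≥0∞}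

theorem withDensity_apply_le_const_mul {U : Set α} (hU : MeasurableSet U) (hk : k ≠ ∞)
    (h : ∀ x ∈ U, g x ≤ k * f x) : m.withDensity g U ≤ k * m.withDensity f U := by
  rw [withDensity_apply _ hU, withDensity_apply _ hU, ← lintegral_const_mul' _ _ hk]
  exact setLIntegral_mono' hU h

theorem const_mul_withDensity_apply_le {U : Set α} (hU : MeasurableSet U)
    (h : ∀ x ∈ U, k * f x ≤ g x) : k * m.withDensity f U ≤ m.withDensity g U := by
  rw [withDensity_apply _ hU, withDensity_apply _ hU]
  exact (lintegral_const_mul_le _ _).trans (setLIntegral_mono' hU h)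

theorem withDensity_le_of_neymanPearson {B T : Set α} (hB : MeasurableSet B)
    (hT : MeasurableSet T) (hk : k ≠ ∞) (h_on : ∀ x ∈ B, k * f x ≤ g x)
    (h_off : ∀ x ∉ B, g x ≤ k * f x) (hTB : m.withDensity f T ≤ m.withDensity f B) :
    m.withDensity g T ≤ m.withDensity g B :=
  le_of_neymanPearson _ _ hB hT k
    (fun _ hUB hU => const_mul_withDensity_apply_le m hU fun x hx => h_on x (hUB hx))
    (fun _ hUB hU => withDensity_apply_le_const_mul m hU hk fun x hx => h_off x (hUB hx)) hTB

end NeymanPearson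

theorem Matrix.IsSymm.sub_dotProduct_mulVec_sub {n R : Type*} [Fintype n] [CommRing R]
    {A : Matrix n n R} (hA : A.IsSymm) (z γ : n → R) :
    (z - γ) ⬝ᵥ A *ᵥ (z - γ) = z ⬝ᵥ A *ᵥ z - 2 * (γ ⬝ᵥ A *ᵥ z) + γ ⬝ᵥ A *ᵥ γ := by
  have hcomm : z ⬝ᵥ A *ᵥ γ = γ ⬝ᵥ A *ᵥ z := by
    rw [dotProduct_mulVec, dotProduct_comm, ← vecMul_transpose, hA.eq]
  simp only [mulVec_sub, dotProduct_sub, sub_dotProduct, hcomm]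
  ring

theorem gaussianPDF_eq_mul_exp {d : ℕ} {S : Matrix (Fin d) (Fin d) ℝ} (hS : S.IsSymm)
    (γ z : EuclideanSpace ℝ (Fin d)) :
    gaussianPDF γ S z = gaussianPDF 0 S z * Real.exp ((fun i => γ i) ⬝ᵥ (S⁻¹ *ᵥ fun i => z i)
      - (fun i => γ i) ⬝ᵥ (S⁻¹ *ᵥ fun i => γ i) / 2) := by
  have h_quad : (fun i => z i - γ i) ⬝ᵥ S⁻¹ *ᵥ (fun i => z i - γ i) =
      (fun i => z i) ⬝ᵥ S⁻¹ *ᵥ (fun i => z i) - 2 * ((fun i => γ i) ⬝ᵥ S⁻¹ *ᵥ fun i => z i)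
        + (fun i => γ i) ⬝ᵥ S⁻¹ *ᵥ fun i => γ i :=
    hS.inv.sub_dotProduct_mulVec_sub _ _
  unfold _root_.gaussianPDF
  simp only [PiLp.zero_apply, sub_zero, h_quad]
  rw [mul_assoc (_ * _) (Real.exp _), ← Real.exp_add]
  congr 2
  ring

theorem gaussian_halfspace_neyman_pearson_upper_general
    {d : ℕ} (S : Matrix (Fin d) (Fin d) ℝ)
    (hsymm : S.IsSymm)
    (γ : EuclideanSpace ℝ (Fin d))
    (q : ℝ)
    (T : Set (EuclideanSpace ℝ (Fin d))) (hT : MeasurableSet T)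
    (hTB : gaussianMeasure 0 S T
          ≤ gaussianMeasure 0 S {z : EuclideanSpace ℝ (Fin d) |
            Real.sqrt ((fun i => γ i) ⬝ᵥ (S⁻¹ *ᵥ fun i => γ i)) * PhiInv (1 - q)
              ≤ (fun i => γ i) ⬝ᵥ (S⁻¹ *ᵥ fun i => z i)}) :
    gaussianMeasure γ S T
      ≤ gaussianMeasure γ S {z : EuclideanSpace ℝ (Fin d) |
          Real.sqrt ((fun i => γ i) ⬝ᵥ (S⁻¹ *ᵥ fun i => γ i)) * PhiInv (1 - q)
            ≤ (fun i => γ i) ⬝ᵥ (S⁻¹ *ᵥ fun i => z i)} := by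
  set Q := (fun i => γ i) ⬝ᵥ (S⁻¹ *ᵥ fun i => γ i)
  set c := Real.sqrt Q * PhiInv (1 - q)
  have h_ratio (z : EuclideanSpace ℝ (Fin d)) :
      ENNReal.ofReal (gaussianPDF γ S z) = ENNReal.ofReal (gaussianPDF 0 S z) *
        ENNReal.ofReal (Real.exp ((fun i => γ i) ⬝ᵥ (S⁻¹ *ᵥ fun i => z i) - Q / 2)) := by
    rw [gaussianPDF_eq_mul_exp hsymm, ENNReal.ofReal_mul' (Real.exp_pos _).le]
  refine withDensity_le_of_neymanPearson volume (k := ENNReal.ofReal (Real.exp (c - Q / 2)))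
    (measurableSet_le measurable_const (by fun_prop)) hT ENNReal.ofReal_ne_top
    (fun z hz => ?_) (fun z hz => ?_) hTB
  · rw [h_ratio, mul_comm]
    gcongr
    exact hz
  · rw [h_ratio, mul_comm]
    gcongr
    exact (not_le.1 hz).le

/-- Neyman–Pearson type monotonicity for the upper half-space B:
any measurable set at most as likely as B under N(0,Σ) is at most as
likely as B under N(γ,Σ). -/
theorem gaussian_halfspace_neyman_pearson_upper
    {d : ℕ} (S : Matrix (Fin d) (Fin d) ℝ)
    (hsymm : S.IsSymm) (hpd : S.PosDef)
    (γ : EuclideanSpace ℝ (Fin d)) (hγ : γ ≠ 0)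
    (q : ℝ) (hq : q ∈ Set.Ioo (0 : ℝ) 1)
    (T : Set (EuclideanSpace ℝ (Fin d))) (hT : MeasurableSet T)
    (hTB : gaussianMeasure 0 S T
          ≤ gaussianMeasure 0 S {z : EuclideanSpace ℝ (Fin d) |
            Real.sqrt ((fun i => γ i) ⬝ᵥ (S⁻¹ *ᵥ fun i => γ i)) * PhiInv (1 - q)
              ≤ (fun i => γ i) ⬝ᵥ (S⁻¹ *ᵥ fun i => z i)}) :
    gaussianMeasure γ S T
      ≤ gaussianMeasure γ S {z : EuclideanSpace ℝ (Fin d) |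
          Real.sqrt ((fun i => γ i) ⬝ᵥ (S⁻¹ *ᵥ fun i => γ i)) * PhiInv (1 - q)
            ≤ (fun i => γ i) ⬝ᵥ (S⁻¹ *ᵥ fun i => z i)} :=
  gaussian_halfspace_neyman_pearson_upper_general S hsymm γ q T hT hTB
end

section
/- Let Y be a finite set of classes, x ∈ ℝ^m, γ ∈ ℝ^d, σ > 0, and let T_δ : ℝ^m → ℝ^m (δ ∈ ℝ^d) be maps satisfying T_β ∘ T_γ' = T_{β+γ'} for all β, γ' ∈ ℝ^d, and I : ℝ^m → ℝ^m a map (interpolation); write T^I_δ := I ∘ T_δ. Let h : ℝ^m → Y be measurable with β ↦ h(T^I_β(x)) measurable, and suppose the interpolation-invariance condition h( T^I_β( T^I_{γ'}(x) ) ) = h( T^I_{β+γ'}(x) ) holds for all β, γ' ∈ ℝ^d. Suppose further there exist p_A, p_B ∈ (0,1) and c_A ∈ Y with P_{β ~ N(0,σ²𝟙)}( h(T^I_β(x)) = c_A ) ≥ p_A ≥ p_B ≥ max_{c ≠ c_A} P_{β ~ N(0,σ²𝟙)}( h(T^I_β(x)) = c ). Then for every γ with ‖γ‖₂ < (σ/2)(Φ⁻¹(p_A)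 − Φ⁻¹(p_B)) and every class c_B ≠ c_A, P_{β ~ N(0,σ²𝟙)}( h(T^I_β( T^I_γ(x) )) = c_A ) > P_{β ~ N(0,σ²𝟙)}( h(T^I_β( T^I_γ(x) )) = c_B ); i.e. the smoothed classifier g_E(z) := argmax_c P_{β ~ N(0,σ²𝟙)}( h(T^I_β(z)) = c ) satisfies g_E( T^I_γ(x) ) = c_A = g_E(x). -/
open MeasureTheory ProbabilityTheory Matrix Set

open scoped ENNReal RealInnerProductSpace

/-!
By the invariance condition, `{β | h (T^I_β (T^I_γ x)) = c}` is the preimage of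
`{β | h (T^I_β x) = c}` under `β ↦ β + γ`, so everything reduces to bounding how much a shift by
`γ` changes the `N(0, σ²𝟙)`-probability of a set. The likelihood ratio of `N(γ, σ²𝟙)` against
`N(0, σ²𝟙)` is an increasing function of `⟪γ, z⟫`, so by the Neyman–Pearson argument half-spaces
orthogonal to `γ` are extremal among sets of a given probability, and for those the shifted
probability is `Φ(Φ⁻¹(p) ∓ ‖γ‖ / σ)`. The bound on `‖γ‖` separates the two resulting bounds.
-/

theorem StieltjesFunction.continuous_of_measure_singleton (f : StieltjesFunction ℝ)
    (hf : ∀ x, f.measure {x} = 0) : Continuous f := by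
  refine continuous_iff_continuousAt.2 fun x => continuousAt_iff_continuous_left_right.2
    ⟨?_, f.right_continuous x⟩
  have hleft : Function.leftLim f x = f x := by
    have := f.measure_singleton x
    rw [hf, eq_comm, ENNReal.ofReal_eq_zero, sub_nonpos] at this
    exact le_antisymm (f.mono.leftLim_le le_rfl) this
  exact continuousWithinAt_Iio_iff_Iic.1 (f.mono.continuousWithinAt_Iio_iff_leftLim_eq.2 hleft)

namespace ProbabilityTheory

theorem continuous_cdf (μ : Measure ℝ) [IsProbabilityMeasure μ] [NullSingletonClass μ] :
    Continuous (cdf μ) :=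
  (cdf μ).continuous_of_measure_singleton fun x => by rw [measure_cdf, measure_singleton]

end ProbabilityTheory

theorem MeasureTheory.Measure.pi_withDensity_ofReal {ι E : Type*} [Fintype ι]
    [MeasurableSpace E] (μ : Measure E) [SigmaFinite μ] {f : ι → E → ℝ}
    (hf : ∀ i, Integrable (f i) μ) (hf0 : ∀ i x, 0 ≤ f i x) :
    Measure.pi (fun i => μ.withDensity fun x => ENNReal.ofReal (f i x))
      = (Measure.pi fun _ => μ).withDensity fun y => ENNReal.ofReal (∏ i, f i (y i)) := by
  have := fun i => isFiniteMeasure_withDensity_ofReal (hf i).2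
  refine Measure.pi_eq fun s hs => ?_
  rw [withDensity_apply _ (MeasurableSet.univ_pi hs), Measure.restrict_pi_pi,
    ← ofReal_integral_eq_lintegral_ofReal (Integrable.fintype_prod fun i => (hf i).restrict)
      (ae_of_all _ fun y => Finset.prod_nonneg fun i _ => hf0 i (y i)),
    integral_fintype_prod_eq_prod,
    ENNReal.ofReal_prod_of_nonneg fun i _ => setIntegral_nonneg (hs i) fun x _ => hf0 i x]
  refine Finset.prod_congr rfl fun i _ => ?_
  rw [withDensity_apply _ (hs i),
    ofReal_integral_eq_lintegral_ofReal (hf i).restrict (ae_of_all _ (hf0 i))]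

theorem MeasureTheory.setLIntegral_le_setLIntegral_of_measure_le {α : Type*}
    [MeasurableSpace α] {μ : Measure α} [IsFiniteMeasure μ] {f : α → ℝ≥0∞} (hf : Measurable f)
    {c : ℝ≥0∞} {P Q : Set α} (hP : MeasurableSet P) (hQ : MeasurableSet Q)
    (hfQ : ∀ z ∈ Q \ P, f z ≤ c) (hfP : ∀ z ∈ P \ Q, c ≤ f z) (hμ : μ Q ≤ μ P) :
    ∫⁻ z in Q, f z ∂μ ≤ ∫⁻ z in P, f z ∂μ := by
  have hdiff : μ (Q \ P) ≤ μ (P \ Q) := by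
    rw [← measure_inter_add_sdiff Q hP, ← measure_inter_add_sdiff P hQ, inter_comm] at hμ
    exact (ENNReal.add_le_add_iff_left (measure_ne_top _ _)).1 hμ
  rw [← lintegral_inter_add_sdiff f Q hP, ← lintegral_inter_add_sdiff f P hQ, inter_comm]
  refine add_le_add le_rfl ?_
  calc ∫⁻ z in Q \ P, f z ∂μ ≤ ∫⁻ _ in Q \ P, c ∂μ := setLIntegral_mono measurable_const hfQ
    _ = c * μ (Q \ P) := setLIntegral_const _ _
    _ ≤ c * μ (P \ Q) := by gcongr
    _ = ∫⁻ _ in P \ Q, c ∂μ := (setLIntegral_const _ _).symm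
    _ ≤ ∫⁻ z in P \ Q, f z ∂μ := setLIntegral_mono hf hfP

theorem Phi_eq_cdf : Phi = cdf (gaussianReal 0 1) :=
  funext fun x => (cdf_eq_real _ x).symm

theorem ofReal_Phi (x : ℝ) : ENNReal.ofReal (Phi x) = gaussianReal 0 1 (Iic x) := by
  rw [Phi_eq_cdf, ofReal_cdf]

theorem Phi_nonneg (x : ℝ) : 0 ≤ Phi x := ENNReal.toReal_nonneg

theorem strictMono_Phi : StrictMono Phi := by
  intro a b hab
  have hpos : gaussianReal 0 1 (Ioc a b) ≠ 0 := fun h => by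
    simpa [hab.not_ge] using gaussianReal_absolutelyContinuous' 0 one_ne_zero h
  rwa [← measure_cdf (gaussianReal 0 1), StieltjesFunction.measure_Ioc, ← Phi_eq_cdf,
    Ne, ENNReal.ofReal_eq_zero, not_le, sub_pos] at hpos

theorem continuous_Phi : Continuous Phi := by
  have := nullSingletonClass_gaussianReal (μ := 0) one_ne_zero
  rw [Phi_eq_cdf]
  exact continuous_cdf _

theorem Phi_PhiInv {p : ℝ} (hp : p ∈ Ioo 0 1) : Phi (PhiInv p) = p := by
  refine Function.invFun_eq (mem_range_of_exists_le_of_exists_ge continuous_Phi ?_ ?_)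
  · rw [Phi_eq_cdf]
    exact ((tendsto_cdf_atBot _).eventually (ge_mem_nhds hp.1)).exists
  · rw [Phi_eq_cdf]
    exact ((tendsto_cdf_atTop _).eventually (le_mem_nhds hp.2)).exists

theorem gaussianReal_zero_sq_eq_map_mul (s : ℝ) :
    gaussianReal 0 (s ^ 2).toNNReal = (gaussianReal 0 1).map (s * ·) := by
  rw [gaussianReal_map_const_mul, mul_zero, mul_one]
  congr
  ext
  simp [sq_nonneg]

theorem gaussianReal_zero_Iic {s : ℝ} (hs : 0 < s) (t : ℝ) :
    gaussianReal 0 (s ^ 2).toNNReal (Iic t) = ENNReal.ofReal (Phi (t / s)) := by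
  have hpre : (s * ·) ⁻¹' Iic t = Iic (t / s) := by
    ext x
    simp [le_div_iff₀ hs, mul_comm]
  rw [gaussianReal_zero_sq_eq_map_mul, Measure.map_apply (by fun_prop) measurableSet_Iic, hpre,
    ofReal_Phi]

section GaussianMeasure

variable {d : ℕ} {σ : ℝ}

theorem gaussianPDF_zero_smul_one (hσ : 0 < σ) (z : EuclideanSpace ℝ (Fin d)) :
    _root_.gaussianPDF 0 (σ ^ 2 • (1 : Matrix (Fin d) (Fin d) ℝ)) z
      = (2 * Real.pi * σ ^ 2) ^ (-(d : ℝ) / 2) * Real.exp (-‖z‖ ^ 2 / (2 * σ ^ 2)) := by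
  have hσ2 : 0 < σ ^ 2 := by positivity
  have hinv : (σ ^ 2 • (1 : Matrix (Fin d) (Fin d) ℝ))⁻¹ = (σ ^ 2)⁻¹ • 1 := by
    refine Matrix.inv_eq_left_inv ?_
    rw [smul_mul_smul, Matrix.one_mul, inv_mul_cancel₀ hσ2.ne', one_smul]
  have hdot : (fun i => z i) ⬝ᵥ (fun i => z i) = ‖z‖ ^ 2 := by
    rw [EuclideanSpace.real_norm_sq_eq]
    simp [dotProduct, sq]
  have hdet : (σ ^ 2 • (1 : Matrix (Fin d) (Fin d) ℝ)).det ^ (-(1 : ℝ) / 2)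
      = (σ ^ 2) ^ (-(d : ℝ) / 2) := by
    rw [Matrix.det_smul, Matrix.det_one, mul_one, Fintype.card_fin, ← Real.rpow_natCast,
      ← Real.rpow_mul hσ2.le]
    ring_nf
  simp only [_root_.gaussianPDF, hinv, PiLp.zero_apply, sub_zero, Matrix.smul_mulVec,
    Matrix.one_mulVec, dotProduct_smul, smul_eq_mul, hdot, hdet]
  rw [Real.mul_rpow (by positivity) hσ2.le]
  congr 2
  field_simp

theorem gaussianPDF_zero_smul_one_eq_prod (hσ : 0 < σ) (z : EuclideanSpace ℝ (Fin d)) :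
    _root_.gaussianPDF 0 (σ ^ 2 • (1 : Matrix (Fin d) (Fin d) ℝ)) z
      = ∏ i, gaussianPDFReal 0 (σ ^ 2).toNNReal (z i) := by
  have h2πσ : 0 < 2 * Real.pi * σ ^ 2 := by positivity
  simp only [gaussianPDFReal, Real.coe_toNNReal _ (sq_nonneg σ), sub_zero,
    Finset.prod_mul_distrib, Finset.prod_const, Finset.card_univ, Fintype.card_fin,
    ← Real.exp_sum, gaussianPDF_zero_smul_one hσ, EuclideanSpace.real_norm_sq_eq,
    ← Finset.sum_div, ← Finset.sum_neg_distrib]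
  rw [Real.sqrt_eq_rpow, ← Real.rpow_neg h2πσ.le, ← Real.rpow_mul_natCast h2πσ.le]
  ring_nf

theorem gaussianMeasure_zero_smul_one_eq_map_pi (hσ : 0 < σ) :
    gaussianMeasure (0 : EuclideanSpace ℝ (Fin d)) (σ ^ 2 • 1)
      = (Measure.pi fun _ => gaussianReal 0 (σ ^ 2).toNNReal).map (WithLp.toLp 2) := by
  have hv : (σ ^ 2).toNNReal ≠ 0 := by simp [hσ.ne']
  simp_rw [gaussianReal_of_var_ne_zero _ hv, ProbabilityTheory.gaussianPDF_def]
  rw [Measure.pi_withDensity_ofReal _ (fun _ => integrable_gaussianPDFReal _ _)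
    (fun _ => gaussianPDFReal_nonneg _ _), ← volume_pi]
  ext s hs
  have hpdf : Measurable fun z : EuclideanSpace ℝ (Fin d) =>
      ENNReal.ofReal (_root_.gaussianPDF 0 (σ ^ 2 • 1) z) := by
    simp_rw [gaussianPDF_zero_smul_one hσ]
    fun_prop
  rw [Measure.map_apply (by fun_prop) hs, withDensity_apply _ (hs.preimage (by fun_prop)),
    gaussianMeasure, withDensity_apply _ hs,
    ← (PiLp.volume_preserving_toLp (Fin d)).setLIntegral_comp_preimage hs hpdf]
  simp_rw [gaussianPDF_zero_smul_one_eq_prod hσ]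

theorem gaussianMeasure_zero_smul_one_eq_map_stdGaussian (hσ : 0 < σ) :
    gaussianMeasure (0 : EuclideanSpace ℝ (Fin d)) (σ ^ 2 • 1)
      = (stdGaussian (EuclideanSpace ℝ (Fin d))).map (σ • ·) := by
  rw [gaussianMeasure_zero_smul_one_eq_map_pi hσ, gaussianReal_zero_sq_eq_map_mul, ← map_pi_eq_stdGaussian,
    Measure.map_map (by fun_prop) (by fun_prop),
    ← Measure.pi_map_pi (fun _ => (measurable_const_mul σ).aemeasurable),
    Measure.map_map (by fun_prop) (by fun_prop)]
  rfl

theorem isProbabilityMeasure_gaussianMeasure_zero_smul_one (hσ : 0 < σ) :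
    IsProbabilityMeasure (gaussianMeasure (0 : EuclideanSpace ℝ (Fin d)) (σ ^ 2 • 1)) := by
  rw [gaussianMeasure_zero_smul_one_eq_map_stdGaussian hσ]
  exact Measure.isProbabilityMeasure_map (by fun_prop)

theorem gaussianMeasure_zero_smul_one_map_inner (hσ : 0 < σ) (v : EuclideanSpace ℝ (Fin d)) :
    (gaussianMeasure (0 : EuclideanSpace ℝ (Fin d)) (σ ^ 2 • 1)).map (⟪v, ·⟫)
      = gaussianReal 0 ((σ * ‖v‖) ^ 2).toNNReal := by
  let L : StrongDual ℝ (EuclideanSpace ℝ (Fin d)) := σ • innerSL ℝ v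
  have hL : (⟪v, ·⟫) ∘ (σ • ·) = L := by
    ext z
    simp [L, inner_smul_right]
  rw [gaussianMeasure_zero_smul_one_eq_map_stdGaussian hσ, Measure.map_map (by fun_prop)
    (by fun_prop), hL, IsGaussian.map_eq_gaussianReal, integral_strongDual_stdGaussian,
    variance_dual_stdGaussian, norm_smul, innerSL_apply_norm, Real.norm_of_nonneg hσ.le]

theorem gaussianMeasure_zero_smul_one_halfspace (hσ : 0 < σ) {v : EuclideanSpace ℝ (Fin d)}
    (hv : v ≠ 0) (t : ℝ) :
    gaussianMeasure (0 : EuclideanSpace ℝ (Fin d)) (σ ^ 2 • 1) {z | ⟪v, z⟫ ≤ t}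
      = ENNReal.ofReal (Phi (t / (σ * ‖v‖))) := by
  have hset : {z | ⟪v, z⟫ ≤ t} = (⟪v, ·⟫) ⁻¹' Iic t := rfl
  rw [hset, ← Measure.map_apply (by fun_prop) measurableSet_Iic,
    gaussianMeasure_zero_smul_one_map_inner hσ,
    gaussianReal_zero_Iic (mul_pos hσ (norm_pos_iff.2 hv))]

theorem gaussianMeasure_zero_smul_one_preimage_add (hσ : 0 < σ) (γ : EuclideanSpace ℝ (Fin d))
    {S : Set (EuclideanSpace ℝ (Fin d))} (hS : MeasurableSet S) :
    gaussianMeasure 0 (σ ^ 2 • 1) ((· + γ) ⁻¹' S)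
      = ∫⁻ z in S, ENNReal.ofReal (Real.exp ((⟪γ, z⟫ - ‖γ‖ ^ 2 / 2) / σ ^ 2))
          ∂gaussianMeasure 0 (σ ^ 2 • 1) := by
  set D := fun z : EuclideanSpace ℝ (Fin d) =>
    ENNReal.ofReal (_root_.gaussianPDF 0 (σ ^ 2 • (1 : Matrix (Fin d) (Fin d) ℝ)) z)
  have hD : Measurable D := by
    simp_rw [D, gaussianPDF_zero_smul_one hσ]
    fun_prop
  have hratio (w : EuclideanSpace ℝ (Fin d)) :
      D (w - γ) = D w * ENNReal.ofReal (Real.exp ((⟪γ, w⟫ - ‖γ‖ ^ 2 / 2) / σ ^ 2)) := by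
    simp only [D, gaussianPDF_zero_smul_one hσ]
    rw [← ENNReal.ofReal_mul (by positivity), mul_assoc _ (Real.exp _), ← Real.exp_add,
      norm_sub_sq_real, real_inner_comm]
    congr 3
    field_simp
    ring
  calc gaussianMeasure 0 (σ ^ 2 • 1) ((· + γ) ⁻¹' S)
      = ∫⁻ z in (· + γ) ⁻¹' S, D (z + γ - γ) := by
        simp [gaussianMeasure, withDensity_apply _ (hS.preimage (measurable_add_const γ)), D]
    _ = ∫⁻ w in S, D (w - γ) :=
        (measurePreserving_add_right volume γ).setLIntegral_comp_preimage hS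
          (hD.comp (measurable_sub_const γ))
    _ = ∫⁻ w in S, ENNReal.ofReal (Real.exp ((⟪γ, w⟫ - ‖γ‖ ^ 2 / 2) / σ ^ 2))
          ∂gaussianMeasure 0 (σ ^ 2 • 1) := by
        rw [gaussianMeasure, setLIntegral_withDensity_eq_setLIntegral_mul _ hD (by fun_prop) hS]
        simp_rw [hratio]
        rfl

theorem preimage_add_setOf_inner_le (v γ : EuclideanSpace ℝ (Fin d)) (t : ℝ) :
    (· + γ) ⁻¹' {z | ⟪v, z⟫ ≤ t} = {z | ⟪v, z⟫ ≤ t - ⟪v, γ⟫} := by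
  ext z
  simp [inner_add_right, le_sub_iff_add_le]

theorem ofReal_Phi_sub_le_gaussianMeasure_preimage_add (hσ : 0 < σ)
    (γ : EuclideanSpace ℝ (Fin d)) {S : Set (EuclideanSpace ℝ (Fin d))} (hS : MeasurableSet S)
    {a : ℝ} (ha : ENNReal.ofReal (Phi a) ≤ gaussianMeasure 0 (σ ^ 2 • 1) S) :
    ENNReal.ofReal (Phi (a - ‖γ‖ / σ)) ≤ gaussianMeasure 0 (σ ^ 2 • 1) ((· + γ) ⁻¹' S) := by
  rcases eq_or_ne γ 0 with rfl | hγ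
  · simpa using ha
  have := isProbabilityMeasure_gaussianMeasure_zero_smul_one (d := d) hσ
  have hs : 0 < σ * ‖γ‖ := mul_pos hσ (norm_pos_iff.2 hγ)
  set t := σ * ‖γ‖ * a
  set H := {z : EuclideanSpace ℝ (Fin d) | ⟪γ, z⟫ ≤ t}
  have hH : MeasurableSet H := measurableSet_le (by fun_prop) measurable_const
  have hμH : gaussianMeasure 0 (σ ^ 2 • 1) H = ENNReal.ofReal (Phi a) := by
    rw [gaussianMeasure_zero_smul_one_halfspace hσ hγ, mul_div_cancel_left₀ _ hs.ne']
  have hμH' : gaussianMeasure 0 (σ ^ 2 • 1) ((· + γ) ⁻¹' H)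
      = ENNReal.ofReal (Phi (a - ‖γ‖ / σ)) := by
    rw [preimage_add_setOf_inner_le, gaussianMeasure_zero_smul_one_halfspace hσ hγ,
      real_inner_self_eq_norm_sq]
    congr 2
    field_simp
    ring
  rw [← hμH', gaussianMeasure_zero_smul_one_preimage_add hσ γ hH,
    gaussianMeasure_zero_smul_one_preimage_add hσ γ hS]
  refine setLIntegral_le_setLIntegral_of_measure_le (by fun_prop) hS hH
    (c := ENNReal.ofReal (Real.exp ((t - ‖γ‖ ^ 2 / 2) / σ ^ 2))) (fun z hz => ?_)
    (fun z hz => ?_) (hμH ▸ ha)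
  · have : ⟪γ, z⟫ ≤ t := hz.1
    gcongr
  · have : t ≤ ⟪γ, z⟫ := (not_le.1 hz.2).le
    gcongr

theorem gaussianMeasure_preimage_add_le_ofReal_Phi_add (hσ : 0 < σ)
    (γ : EuclideanSpace ℝ (Fin d)) {S : Set (EuclideanSpace ℝ (Fin d))} (hS : MeasurableSet S)
    {b : ℝ} (hb : gaussianMeasure 0 (σ ^ 2 • 1) S ≤ ENNReal.ofReal (Phi b)) :
    gaussianMeasure 0 (σ ^ 2 • 1) ((· + γ) ⁻¹' S) ≤ ENNReal.ofReal (Phi (b + ‖γ‖ / σ)) := by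
  rcases eq_or_ne γ 0 with rfl | hγ
  · simpa using hb
  have := isProbabilityMeasure_gaussianMeasure_zero_smul_one (d := d) hσ
  have hs : 0 < σ * ‖γ‖ := mul_pos hσ (norm_pos_iff.2 hγ)
  have hγ' : -γ ≠ 0 := neg_ne_zero.2 hγ
  set t := σ * ‖γ‖ * b
  set H := {z : EuclideanSpace ℝ (Fin d) | ⟪-γ, z⟫ ≤ t}
  have hH : MeasurableSet H := measurableSet_le (by fun_prop) measurable_const
  have hμH : gaussianMeasure 0 (σ ^ 2 • 1) H = ENNReal.ofReal (Phi b) := by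
    rw [gaussianMeasure_zero_smul_one_halfspace hσ hγ', norm_neg, mul_div_cancel_left₀ _ hs.ne']
  have hμH' : gaussianMeasure 0 (σ ^ 2 • 1) ((· + γ) ⁻¹' H)
      = ENNReal.ofReal (Phi (b + ‖γ‖ / σ)) := by
    rw [preimage_add_setOf_inner_le, gaussianMeasure_zero_smul_one_halfspace hσ hγ', norm_neg,
      inner_neg_left, real_inner_self_eq_norm_sq]
    congr 2
    field_simp
    ring
  rw [← hμH', gaussianMeasure_zero_smul_one_preimage_add hσ γ hH,
    gaussianMeasure_zero_smul_one_preimage_add hσ γ hS]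
  refine setLIntegral_le_setLIntegral_of_measure_le (by fun_prop) hH hS
    (c := ENNReal.ofReal (Real.exp ((-t - ‖γ‖ ^ 2 / 2) / σ ^ 2))) (fun z hz => ?_)
    (fun z hz => ?_) (hμH ▸ hb)
  · have hz' : t < -⟪γ, z⟫ := by simpa [H] using hz.2
    have : ⟪γ, z⟫ ≤ -t := by linarith
    gcongr
  · have hz' : -⟪γ, z⟫ ≤ t := by simpa [H] using hz.1
    have : -t ≤ ⟪γ, z⟫ := by linarith
    gcongr

end GaussianMeasure

theorem smoothing_with_interpolation_invariance_general
    {m d : ℕ} {Y : Type*}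
    (x : EuclideanSpace ℝ (Fin m))
    (σ : ℝ) (hσ : 0 < σ)
    (T : EuclideanSpace ℝ (Fin d) → EuclideanSpace ℝ (Fin m) → EuclideanSpace ℝ (Fin m))
    (I : EuclideanSpace ℝ (Fin m) → EuclideanSpace ℝ (Fin m))
    (h : EuclideanSpace ℝ (Fin m) → Y)
    (hmeas : ∀ c : Y, MeasurableSet {β : EuclideanSpace ℝ (Fin d) | h (I (T β x)) = c})
    (hinv : ∀ β γ' : EuclideanSpace ℝ (Fin d),
        h (I (T β (I (T γ' x)))) = h (I (T (β + γ') x)))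
    (pA pB : ℝ) (hpA : pA ∈ Set.Ioo (0 : ℝ) 1) (hpB : pB ∈ Set.Ioo (0 : ℝ) 1)
    (cA : Y)
    (hA : pA ≤ (gaussianMeasure 0 (σ ^ 2 • (1 : Matrix (Fin d) (Fin d) ℝ))
            {β | h (I (T β x)) = cA}).toReal)
    (hB : ∀ c : Y, c ≠ cA →
        (gaussianMeasure 0 (σ ^ 2 • (1 : Matrix (Fin d) (Fin d) ℝ))
            {β | h (I (T β x)) = c}).toReal ≤ pB) :
    ∀ γ : EuclideanSpace ℝ (Fin d), ‖γ‖ < σ / 2 * (PhiInv pA - PhiInv pB) →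
      ∀ cB : Y, cB ≠ cA →
        gaussianMeasure 0 (σ ^ 2 • (1 : Matrix (Fin d) (Fin d) ℝ))
            {β | h (I (T β (I (T γ x)))) = cB}
          < gaussianMeasure 0 (σ ^ 2 • (1 : Matrix (Fin d) (Fin d) ℝ))
            {β | h (I (T β (I (T γ x)))) = cA} := by
  intro γ hγ cB hcB
  have := isProbabilityMeasure_gaussianMeasure_zero_smul_one (d := d) hσ
  have hshift (c : Y) :
      {β | h (I (T β (I (T γ x)))) = c} = (· + γ) ⁻¹' {β | h (I (T β x)) = c} := by
    ext β
    simp [hinv]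
  have hgap : PhiInv pB + ‖γ‖ / σ < PhiInv pA - ‖γ‖ / σ := by
    have : ‖γ‖ / σ < (PhiInv pA - PhiInv pB) / 2 := by
      rw [div_lt_iff₀ hσ]
      linarith
    linarith
  rw [hshift, hshift]
  calc _ ≤ ENNReal.ofReal (Phi (PhiInv pB + ‖γ‖ / σ)) := by
        refine gaussianMeasure_preimage_add_le_ofReal_Phi_add hσ γ (hmeas cB) ?_
        rw [Phi_PhiInv hpB, ENNReal.le_ofReal_iff_toReal_le (measure_ne_top _ _) hpB.1.le]
        exact hB cB hcB
    _ < ENNReal.ofReal (Phi (PhiInv pA - ‖γ‖ / σ)) :=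
        (ENNReal.ofReal_lt_ofReal_iff_of_nonneg (Phi_nonneg _)).2 (strictMono_Phi hgap)
    _ ≤ _ := by
        refine ofReal_Phi_sub_le_gaussianMeasure_preimage_add hσ γ (hmeas cA) ?_
        rw [Phi_PhiInv hpA]
        exact ENNReal.ofReal_le_of_le_toReal hA

/-- Smoothing certificate for a non-composing transformation
T^I_δ = I ∘ T_δ under the interpolation-invariance condition
h(T^I_β(T^I_γ'(x))) = h(T^I_{β+γ'}(x)). -/
theorem smoothing_with_interpolation_invariance
    {m d : ℕ} {Y : Type*} [Fintype Y] [MeasurableSpace Y] [MeasurableSingletonClass Y]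
    (x : EuclideanSpace ℝ (Fin m))
    (σ : ℝ) (hσ : 0 < σ)
    (T : EuclideanSpace ℝ (Fin d) → EuclideanSpace ℝ (Fin m) → EuclideanSpace ℝ (Fin m))
    (hcomp : ∀ β γ' : EuclideanSpace ℝ (Fin d), T β ∘ T γ' = T (β + γ'))
    (I : EuclideanSpace ℝ (Fin m) → EuclideanSpace ℝ (Fin m))
    (h : EuclideanSpace ℝ (Fin m) → Y) (hmeas_h : Measurable h)
    (hmeas : ∀ c : Y, MeasurableSet {β : EuclideanSpace ℝ (Fin d) | h (I (T β x)) = c})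
    (hinv : ∀ β γ' : EuclideanSpace ℝ (Fin d),
        h (I (T β (I (T γ' x)))) = h (I (T (β + γ') x)))
    (pA pB : ℝ) (hpA : pA ∈ Set.Ioo (0 : ℝ) 1) (hpB : pB ∈ Set.Ioo (0 : ℝ) 1)
    (cA : Y)
    (hA : pA ≤ (gaussianMeasure 0 (σ ^ 2 • (1 : Matrix (Fin d) (Fin d) ℝ))
            {β | h (I (T β x)) = cA}).toReal)
    (hAB : pB ≤ pA)
    (hB : ∀ c : Y, c ≠ cA →
        (gaussianMeasure 0 (σ ^ 2 • (1 : Matrix (Fin d) (Fin d) ℝ))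
            {β | h (I (T β x)) = c}).toReal ≤ pB) :
    ∀ γ : EuclideanSpace ℝ (Fin d), ‖γ‖ < σ / 2 * (PhiInv pA - PhiInv pB) →
      ∀ cB : Y, cB ≠ cA →
        gaussianMeasure 0 (σ ^ 2 • (1 : Matrix (Fin d) (Fin d) ℝ))
            {β | h (I (T β (I (T γ x)))) = cB}
          < gaussianMeasure 0 (σ ^ 2 • (1 : Matrix (Fin d) (Fin d) ℝ))
            {β | h (I (T β (I (T γ x)))) = cA} :=
  smoothing_with_interpolation_invariance_general x σ hσ T I h hmeas hinv pA pB hpA hpB cA hA hB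
end
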